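/- arXiv:1707.09659 — 3 statements merged into one kernel-verified Lean document; each statement's English description precedes it below -/
import Mathlib

section
/- Two-sided efficiency bound for the generalized equilibrated estimate: Let V be a real Hilbert space and G ⊆ V a closed subspace. Let g, ĝ, g_h ∈ G with g ≠ g_h, let s ∈ V with θ̂ := s − ĝ ∈ G^⊥, and suppose ‖g − ĝ‖ ≤ C·d for real numbers C, d. Then 1 ≤ (C·d)/‖g − g_h‖ + ‖s − g_h‖/‖g − g_h‖ ≤ 1 + 2·C·d/‖g − g_h‖ + ‖θ̂‖/‖g − g_h‖. -/
open scoped RealInnerProductSpace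

/-!
Write `s - g_h = θ̂ + (ĝ - g_h)` with `θ̂ ∈ Gᗮ` and `ĝ - g_h ∈ G`. By Pythagoras
`‖ĝ - g_h‖ ≤ ‖s - g_h‖`, so the triangle inequality through `ĝ` gives the lower bound
`‖g - g_h‖ ≤ C d + ‖s - g_h‖`. The triangle inequality through `ĝ` and `g` gives the upper bound
`‖s - g_h‖ ≤ ‖θ̂‖ + C d + ‖g - g_h‖`. Dividing by `‖g - g_h‖ > 0` yields both inequalities.
-/

section

variable {F : Type*} [NormedAddCommGroup F] [InnerProductSpace ℝ F]

theorem norm_le_norm_add_of_inner_eq_zero {x y : F} (h : ⟪x, y⟫ = 0) : ‖y‖ ≤ ‖x + y‖ := by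
  rw [mul_self_le_mul_self_iff (norm_nonneg _) (norm_nonneg _),
    norm_add_sq_eq_norm_sq_add_norm_sq_real h]
  exact le_add_of_nonneg_left (mul_self_nonneg _)

theorem Submodule.norm_le_norm_add_of_mem_orthogonal {K : Submodule ℝ F} {θ x : F}
    (hθ : θ ∈ Kᗮ) (hx : x ∈ K) : ‖x‖ ≤ ‖θ + x‖ :=
  norm_le_norm_add_of_inner_eq_zero (K.inner_left_of_mem_orthogonal hx hθ)

theorem Submodule.norm_sub_le_norm_sub_add_norm_sub_of_sub_mem_orthogonal {K : Submodule ℝ F}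
    {ghat g_h s : F} (hghat : ghat ∈ K) (hgh : g_h ∈ K) (hs : s - ghat ∈ Kᗮ) (g : F) :
    ‖g - g_h‖ ≤ ‖g - ghat‖ + ‖s - g_h‖ := by
  have hpyth : ‖ghat - g_h‖ ≤ ‖s - g_h‖ := by
    simpa using K.norm_le_norm_add_of_mem_orthogonal hs (K.sub_mem hghat hgh)
  linarith [norm_sub_le_norm_sub_add_norm_sub g ghat g_h]

end

theorem two_sided_efficiency_bound_general {V : Type*} [NormedAddCommGroup V]
    [InnerProductSpace ℝ V]
    (G : Submodule ℝ V)
    (g ghat g_h s : V) (hghat : ghat ∈ G) (hgh : g_h ∈ G)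
    (hne : g ≠ g_h)
    (θhat : V) (hθhat : θhat = s - ghat) (hθmem : θhat ∈ Gᗮ)
    (C d : ℝ) (hCd : ‖g - ghat‖ ≤ C * d) :
    1 ≤ (C * d) / ‖g - g_h‖ + ‖s - g_h‖ / ‖g - g_h‖ ∧
      (C * d) / ‖g - g_h‖ + ‖s - g_h‖ / ‖g - g_h‖
        ≤ 1 + 2 * C * d / ‖g - g_h‖ + ‖θhat‖ / ‖g - g_h‖ := by
  subst hθhat
  have hN : 0 < ‖g - g_h‖ := norm_pos_iff.mpr (sub_ne_zero.mpr hne)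
  have hlower : ‖g - g_h‖ ≤ C * d + ‖s - g_h‖ := by
    linarith [G.norm_sub_le_norm_sub_add_norm_sub_of_sub_mem_orthogonal hghat hgh hθmem g]
  have hupper : ‖s - g_h‖ ≤ ‖s - ghat‖ + ‖g - ghat‖ + ‖g - g_h‖ := by
    linarith [norm_sub_le_norm_sub_add_norm_sub s ghat g_h,
      norm_sub_le_norm_sub_add_norm_sub ghat g g_h, norm_sub_rev ghat g]
  rw [← add_div]
  constructor
  · rwa [one_le_div hN]
  · rw [show 1 + 2 * C * d / ‖g - g_h‖ + ‖s - ghat‖ / ‖g - g_h‖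
        = (‖g - g_h‖ + 2 * C * d + ‖s - ghat‖) / ‖g - g_h‖ by field_simp]
    exact div_le_div_of_nonneg_right (by linarith) hN.le

/-- Two-sided efficiency bound for the generalized equilibrated estimate. -/
theorem two_sided_efficiency_bound {V : Type*} [NormedAddCommGroup V]
    [InnerProductSpace ℝ V] [CompleteSpace V]
    (G : Submodule ℝ V) (hG : IsClosed (G : Set V))
    (g ghat g_h s : V) (hg : g ∈ G) (hghat : ghat ∈ G) (hgh : g_h ∈ G)
    (hne : g ≠ g_h)
    (θhat : V) (hθhat : θhat = s - ghat) (hθmem : θhat ∈ Gᗮ)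
    (C d : ℝ) (hCd : ‖g - ghat‖ ≤ C * d) :
    1 ≤ (C * d) / ‖g - g_h‖ + ‖s - g_h‖ / ‖g - g_h‖ ∧
      (C * d) / ‖g - g_h‖ + ‖s - g_h‖ / ‖g - g_h‖
        ≤ 1 + 2 * C * d / ‖g - g_h‖ + ‖θhat‖ / ‖g - g_h‖ :=
  two_sided_efficiency_bound_general G g ghat g_h s hghat hgh hne θhat hθhat hθmem C d hCd
end

section
/- Improved constant-free goal-oriented bound using Galerkin orthogonality: Let V be a real Hilbert space, G ⊆ V a closed subspace, and S ⊆ G a subspace. Let g, z ∈ G and g_h, z_h ∈ S be such that ⟪g − g_h, v⟫ = 0 for every v ∈ S. Let ϱ, ϖ ∈ V with ϱ − (g − g_h) ∈ G^⊥ and ϖ − (z − z_h) ∈ G^⊥. Then |⟪g − g_h, z⟫| ≤ ‖ϱ‖·‖ϖ‖. -/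
/-!
Write `e = g - g_h ∈ G`. Galerkin orthogonality lets one replace `z` by `z - z_h`, and since
`ϖ - (z - z_h)` is orthogonal to `G ∋ e`, also by `ϖ`; Cauchy–Schwarz gives `‖e‖ ‖ϖ‖`.
Finally `ρ = e + (ρ - e)` is an orthogonal decomposition, so `‖e‖ ≤ ‖ρ‖` by Pythagoras.
-/

open scoped InnerProductSpace

namespace Submodule

variable {𝕜 E : Type*} [RCLike 𝕜] [NormedAddCommGroup E] [InnerProductSpace 𝕜 E]
  {K : Submodule 𝕜 E} {x y w : E}

theorem inner_eq_of_sub_mem_orthogonal (hx : x ∈ K) (hyw : y - w ∈ Kᗮ) :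
    ⟪x, w⟫_𝕜 = ⟪x, y⟫_𝕜 := by
  rw [← sub_eq_zero, ← inner_sub_right, ← neg_sub, inner_neg_right,
    K.inner_right_of_mem_orthogonal hx hyw, neg_zero]

theorem norm_le_of_sub_mem_orthogonal (hx : x ∈ K) (hyx : y - x ∈ Kᗮ) : ‖x‖ ≤ ‖y‖ := by
  have hpyth : ‖y‖ * ‖y‖ = ‖x‖ * ‖x‖ + ‖y - x‖ * ‖y - x‖ := by
    simpa using norm_add_sq_eq_norm_sq_add_norm_sq_of_inner_eq_zero x (y - x)
      (K.inner_right_of_mem_orthogonal hx hyx)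
  refine (mul_self_le_mul_self_iff (norm_nonneg x) (norm_nonneg y)).2 ?_
  linarith [mul_self_nonneg ‖y - x‖]

end Submodule

open scoped RealInnerProductSpace

theorem goal_oriented_improved_bound_general {V : Type*} [NormedAddCommGroup V]
    [InnerProductSpace ℝ V]
    (G : Submodule ℝ V)
    (S : Submodule ℝ V) (hSG : S ≤ G)
    (g z : V) (hg : g ∈ G)
    (g_h z_h : V) (hgh : g_h ∈ S) (hzh : z_h ∈ S)
    (hGalerkin : ∀ v ∈ S, ⟪g - g_h, v⟫ = 0)
    (ρ ϖ : V) (hρ : ρ - (g - g_h) ∈ Gᗮ) (hϖ : ϖ - (z - z_h) ∈ Gᗮ) :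
    |⟪g - g_h, z⟫| ≤ ‖ρ‖ * ‖ϖ‖ := by
  have herr : g - g_h ∈ G := G.sub_mem hg (hSG hgh)
  have hdual : ⟪g - g_h, z⟫ = ⟪g - g_h, ϖ⟫ := by
    rw [← G.inner_eq_of_sub_mem_orthogonal herr hϖ, inner_sub_right, hGalerkin z_h hzh, sub_zero]
  calc |⟪g - g_h, z⟫| = |⟪g - g_h, ϖ⟫| := by rw [hdual]
    _ ≤ ‖g - g_h‖ * ‖ϖ‖ := abs_real_inner_le_norm _ _
    _ ≤ ‖ρ‖ * ‖ϖ‖ := by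
      gcongr
      exact G.norm_le_of_sub_mem_orthogonal herr hρ

/-- Improved constant-free goal-oriented bound using Galerkin orthogonality. -/
theorem goal_oriented_improved_bound {V : Type*} [NormedAddCommGroup V]
    [InnerProductSpace ℝ V] [CompleteSpace V]
    (G : Submodule ℝ V) (hG : IsClosed (G : Set V))
    (S : Submodule ℝ V) (hSG : S ≤ G)
    (g z : V) (hg : g ∈ G) (hz : z ∈ G)
    (g_h z_h : V) (hgh : g_h ∈ S) (hzh : z_h ∈ S)
    (hGalerkin : ∀ v ∈ S, ⟪g - g_h, v⟫ = 0)
    (ρ ϖ : V) (hρ : ρ - (g - g_h) ∈ Gᗮ) (hϖ : ϖ - (z - z_h) ∈ Gᗮ) :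
    |⟪g - g_h, z⟫| ≤ ‖ρ‖ * ‖ϖ‖ :=
  goal_oriented_improved_bound_general G S hSG g z hg g_h z_h hgh hzh hGalerkin ρ ϖ hρ hϖ
end

section
/- Identity underlying the proposed goal-oriented error approximation η^{ϱϖ}: Let V be a real Hilbert space, G ⊆ V a closed subspace, and S ⊆ G a subspace. Let g, z ∈ G and g_h, z_h ∈ S be such that ⟪g − g_h, v⟫ = 0 for every v ∈ S. Let ϱ, ϖ ∈ V with θ := ϱ − (g − g_h) ∈ G^⊥ and ζ := ϖ − (z − z_h) ∈ G^⊥. Then ⟪g − g_h, z⟫ = ⟪ϱ, ϖ⟫ − ⟪θ, ζ⟫. -/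
open scoped RealInnerProductSpace

/-! Writing `ϱ = (g - g_h) + θ` and `ϖ = (z - z_h) + ζ` with both errors in `G` and `θ, ζ ∈ Gᗮ`,
the cross terms of `⟪ϱ, ϖ⟫` vanish, so `⟪ϱ, ϖ⟫ - ⟪θ, ζ⟫ = ⟪g - g_h, z - z_h⟫`; Galerkin
orthogonality against `z_h ∈ S` then removes `z_h`. -/

theorem Submodule.inner_add_add_sub_inner_of_mem_orthogonal {𝕜 E : Type*} [RCLike 𝕜]
    [NormedAddCommGroup E] [InnerProductSpace 𝕜 E] {K : Submodule 𝕜 E} {u v x y : E}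
    (hu : u ∈ K) (hv : v ∈ K) (hx : x ∈ Kᗮ) (hy : y ∈ Kᗮ) :
    inner 𝕜 (u + x) (v + y) - inner 𝕜 x y = inner 𝕜 u v := by
  rw [inner_add_left, inner_add_right, inner_add_right, K.inner_right_of_mem_orthogonal hu hy,
    K.inner_left_of_mem_orthogonal hv hx]
  ring

theorem inner_sub_eq_inner_of_forall_inner_eq_zero {𝕜 E : Type*} [RCLike 𝕜]
    [NormedAddCommGroup E] [InnerProductSpace 𝕜 E] {S : Submodule 𝕜 E} {e z z_h : E}
    (he : ∀ v ∈ S, inner 𝕜 e v = 0) (hzh : z_h ∈ S) :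
    inner 𝕜 e (z - z_h) = inner 𝕜 e z := by
  rw [inner_sub_right, he z_h hzh, sub_zero]

theorem qoi_identity_rho_varpi_general {V : Type*} [NormedAddCommGroup V]
    [InnerProductSpace ℝ V]
    (G : Submodule ℝ V)
    (S : Submodule ℝ V) (hSG : S ≤ G)
    (g z : V) (hg : g ∈ G) (hz : z ∈ G)
    (g_h z_h : V) (hgh : g_h ∈ S) (hzh : z_h ∈ S)
    (hGalerkin : ∀ v ∈ S, ⟪g - g_h, v⟫ = 0)
    (ρ ϖ : V) (θ ζ : V) (hθ : θ = ρ - (g - g_h)) (hζ : ζ = ϖ - (z - z_h))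
    (hθmem : θ ∈ Gᗮ) (hζmem : ζ ∈ Gᗮ) :
    ⟪g - g_h, z⟫ = ⟪ρ, ϖ⟫ - ⟪θ, ζ⟫ := by
  have hρ : ρ = (g - g_h) + θ := by rw [hθ, add_sub_cancel]
  have hϖ : ϖ = (z - z_h) + ζ := by rw [hζ, add_sub_cancel]
  rw [hρ, hϖ, Submodule.inner_add_add_sub_inner_of_mem_orthogonal
    (G.sub_mem hg (hSG hgh)) (G.sub_mem hz (hSG hzh)) hθmem hζmem,
    inner_sub_eq_inner_of_forall_inner_eq_zero hGalerkin hzh]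

/-- Identity underlying the proposed goal-oriented error approximation η^{ϱϖ}. -/
theorem qoi_identity_rho_varpi {V : Type*} [NormedAddCommGroup V]
    [InnerProductSpace ℝ V] [CompleteSpace V]
    (G : Submodule ℝ V) (hG : IsClosed (G : Set V))
    (S : Submodule ℝ V) (hSG : S ≤ G)
    (g z : V) (hg : g ∈ G) (hz : z ∈ G)
    (g_h z_h : V) (hgh : g_h ∈ S) (hzh : z_h ∈ S)
    (hGalerkin : ∀ v ∈ S, ⟪g - g_h, v⟫ = 0)
    (ρ ϖ : V) (θ ζ : V) (hθ : θ = ρ - (g - g_h)) (hζ : ζ = ϖ - (z - z_h))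
    (hθmem : θ ∈ Gᗮ) (hζmem : ζ ∈ Gᗮ) :
    ⟪g - g_h, z⟫ = ⟪ρ, ϖ⟫ - ⟪θ, ζ⟫ :=
  qoi_identity_rho_varpi_general G S hSG g z hg hz g_h z_h hgh hzh hGalerkin ρ ϖ θ ζ hθ hζ hθmem
    hζmem
end
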